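/- arXiv:1410.6118 — 2 statements merged into one kernel-verified Lean document; each statement's English description precedes it below -/
import Mathlib

section
/- Consider the VIC monotone two-action game setting (finite players P, actions {1,2}, VIC monotonicity as above). Let S₁₂ be the equilibrium state reached by best-response dynamics started from all players choosing action 1, and S₂₁ the equilibrium reached starting from all players choosing action 2. Then for every strong-equilibrium state S, the set of players choosing action 1 in S is contained in the set of players choosing action 1 in S₁₂, and the set of players choosing action 2 in S is contained in the set of players choosing action 2 in S₂₁. In particular, S₁₂ is the equilibrium maximizing the set of action-1 choosers and S₂₁ the one maximizing action-2 choosers. -/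
private lemma fin2_cases (a : Fin 2) : a = 0 ∨ a = 1 := by
  fin_cases a <;> simp

private lemma mono_aux {P : Type*} [Fintype P] [DecidableEq P]
    (u : (P → Fin 2) → P → Fin 2 → unitInterval)
    (hVIC : ∀ (S₁ S₂ : P → Fin 2) (p : P),
      (∀ q, q ≠ p → S₁ q = S₂ q) → S₁ p = 0 → S₂ p = 1 →
      ∀ q : P, u S₂ q 0 ≤ u S₁ q 0 ∧ u S₁ q 1 ≤ u S₂ q 1) :
    ∀ (n : ℕ) (T T' : P → Fin 2),
      (Finset.univ.filter (fun q => T q ≠ T' q)).card ≤ n →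
      (∀ q, T q = 1 → T' q = 1) →
      ∀ q, u T' q 0 ≤ u T q 0 ∧ u T q 1 ≤ u T' q 1 := by
  intro n
  induction n with
  | zero =>
    intro T T' hcard hle q
    have hT : T = T' := by
      funext r
      by_contra hr
      have : r ∈ Finset.univ.filter (fun q => T q ≠ T' q) := by
        simp [hr]
      have := Finset.card_pos.mpr ⟨r, this⟩
      omega
    subst hT; exact ⟨le_rfl, le_rfl⟩
  | succ n ih =>
    intro T T' hcard hle q
    by_cases hD : ∀ r, T r = T' r
    · have hT : T = T' := funext hD
      subst hT; exact ⟨le_rfl, le_rfl⟩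
    · push_neg at hD
      obtain ⟨q₀, hq₀⟩ := hD
      have hT0 : T q₀ = 0 := by
        rcases fin2_cases (T q₀) with h | h
        · exact h
        · exact absurd (h.trans (hle q₀ h).symm) hq₀
      have hT'1 : T' q₀ = 1 := by
        rcases fin2_cases (T' q₀) with h | h
        · exact absurd (hT0.trans h.symm) hq₀
        · exact h
      set T'' := Function.update T q₀ 1 with hT''
      have hstep := hVIC T T'' q₀
        (fun r hr => (Function.update_of_ne hr _ _).symm) hT0
        (Function.update_self _ _ _)
      have hsub : Finset.univ.filter (fun r => T'' r ≠ T' r) ⊆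
          (Finset.univ.filter (fun r => T r ≠ T' r)).erase q₀ := by
        intro r hr
        simp only [Finset.mem_filter, Finset.mem_univ, true_and] at hr
        have hrq : r ≠ q₀ := by
          intro h; subst h
          exact hr (by simp [hT'', hT'1])
        refine Finset.mem_erase.mpr ⟨hrq, ?_⟩
        simp only [Finset.mem_filter, Finset.mem_univ, true_and]
        rwa [hT'', Function.update_of_ne hrq] at hr
      have hmem : q₀ ∈ Finset.univ.filter (fun r => T r ≠ T' r) := by simp [hq₀]
      have hcard' : (Finset.univ.filter (fun r => T'' r ≠ T' r)).card ≤ n := by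
        have h1 := Finset.card_le_card hsub
        rw [Finset.card_erase_of_mem hmem] at h1
        have := Finset.card_pos.mpr ⟨q₀, hmem⟩
        omega
      have hle' : ∀ r, T'' r = 1 → T' r = 1 := by
        intro r hr
        by_cases hrq : r = q₀
        · subst hrq; exact hT'1
        · rw [hT'', Function.update_of_ne hrq] at hr
          exact hle r hr
      have htail := ih T'' T' hcard' hle'
      exact ⟨(htail q).1.trans (hstep q).1, (hstep q).2.trans (htail q).2⟩

/-- Extremality of the two best-response equilibria in the VIC monotone
two-action game.  `S₁₂` (reached from the all-`0`, i.e. all-action-1, state) is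
the strong equilibrium maximizing the set of action-`0` choosers, and `S₂₁`
(reached from the all-`1` state) the one maximizing the action-`1` choosers:
every strong-equilibrium state `S` has its action-`0` choosers contained in
those of `S₁₂` and its action-`1` choosers contained in those of `S₂₁`. -/
theorem stmt_5 (P : Type*) [Fintype P] [DecidableEq P]
    (u : (P → Fin 2) → P → Fin 2 → unitInterval)
    (hVIC : ∀ (S₁ S₂ : P → Fin 2) (p : P),
      (∀ q, q ≠ p → S₁ q = S₂ q) → S₁ p = 0 → S₂ p = 1 →
      ∀ q : P, u S₂ q 0 ≤ u S₁ q 0 ∧ u S₁ q 1 ≤ u S₂ q 1)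
    (seq seq' : ℕ → (P → Fin 2))
    (hseq0 : seq 0 = fun _ => 0)
    (hseqS : ∀ (k : ℕ) (p : P),
      seq (k + 1) p = if seq k p = 1 ∨ u (seq k) p 1 > u (seq k) p 0 then 1 else 0)
    (hseq'0 : seq' 0 = fun _ => 1)
    (hseq'S : ∀ (k : ℕ) (p : P),
      seq' (k + 1) p = if seq' k p = 0 ∨ u (seq' k) p 0 > u (seq' k) p 1 then 0 else 1)
    (S₁₂ S₂₁ : P → Fin 2)
    (hS12 : S₁₂ = seq (Fintype.card P))
    (hS21 : S₂₁ = seq' (Fintype.card P)) :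
    ∀ S : P → Fin 2, (∀ (q : P) (a : Fin 2), u S q a ≤ u S q (S q)) →
      {p : P | S p = 0} ⊆ {p : P | S₁₂ p = 0} ∧
      {p : P | S p = 1} ⊆ {p : P | S₂₁ p = 1} := by
  intro S hEq
  have mono := mono_aux u hVIC (Fintype.card P)
  -- Invariant 1: at every stage, seq k p = 1 forces S p = 1.
  have inv1 : ∀ k p, seq k p = 1 → S p = 1 := by
    intro k
    induction k with
    | zero => intro p hp; rw [hseq0] at hp; exact absurd hp (by simp)
    | succ k ih =>
      intro p hp
      rw [hseqS k p] at hp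
      split_ifs at hp with h
      · rcases h with h | h
        · exact ih p h
        · by_contra hS1
          have hSp0 : S p = 0 := (fin2_cases (S p)).resolve_right hS1
          have hskp : seq k p = 0 := by
            rcases fin2_cases (seq k p) with h0 | h1
            · exact h0
            · exact absurd (ih p h1) hS1
          have hc : (Finset.univ.filter (fun q => seq k q ≠ S q)).card ≤ Fintype.card P :=
            le_trans (Finset.card_le_card (Finset.filter_subset _ _)) (by simp)
          have hm := mono (seq k) S hc ih p
          have h1 : u S p 0 < u S p 1 :=
            lt_of_le_of_lt hm.1 (lt_of_lt_of_le h hm.2)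
          have h2 := hEq p 1
          rw [hSp0] at h2
          exact absurd h2 (not_le.mpr h1)
      · exact absurd hp (by simp)
  -- Invariant 2: at every stage, seq' k p = 0 forces S p = 0.
  have inv2 : ∀ k p, seq' k p = 0 → S p = 0 := by
    intro k
    induction k with
    | zero => intro p hp; rw [hseq'0] at hp; exact absurd hp (by simp)
    | succ k ih =>
      intro p hp
      rw [hseq'S k p] at hp
      split_ifs at hp with h
      · rcases h with h | h
        · exact ih p h
        · by_contra hS0
          have hSp1 : S p = 1 := (fin2_cases (S p)).resolve_left hS0
          have hle : ∀ q, S q = 1 → seq' k q = 1 := by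
            intro q hq
            rcases fin2_cases (seq' k q) with h0 | h1
            · exact absurd (ih q h0) (by rw [hq]; simp)
            · exact h1
          have hc : (Finset.univ.filter (fun q => S q ≠ seq' k q)).card ≤ Fintype.card P :=
            le_trans (Finset.card_le_card (Finset.filter_subset _ _)) (by simp)
          have hm := mono S (seq' k) hc hle p
          have h1 : u S p 1 < u S p 0 :=
            lt_of_le_of_lt hm.2 (lt_of_lt_of_le h hm.1)
          have h2 := hEq p 0
          rw [hSp1] at h2
          exact absurd h2 (not_le.mpr h1)
      · exact absurd hp (by simp)
  constructor
  · intro p hp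
    simp only [Set.mem_setOf_eq] at hp ⊢
    rw [hS12]
    rcases fin2_cases (seq (Fintype.card P) p) with h0 | h1
    · exact h0
    · exact absurd (inv1 _ p h1) (by rw [hp]; simp)
  · intro p hp
    simp only [Set.mem_setOf_eq] at hp ⊢
    rw [hS21]
    rcases fin2_cases (seq' (Fintype.card P) p) with h0 | h1
    · exact absurd (inv2 _ p h0) (by rw [hp]; simp)
    · exact h1
end

section
/- Simultaneous best-response from the all-1 state in the VIC monotone two-action game never overshoots: if S is a state in the best-response sequence (starting from all players choosing action 1 and simultaneously switching each player p with u(S,p,1) < u(S,p,2) to action 2), then every player who has switched to action 2 at any stage continues to weakly prefer action 2 in all subsequent states of the sequence, i.e., if S' is a later state in the sequence and S(p) = 2 then u(S', p, 2) ≥ u(S', p, 1). -/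
open Finset

lemma vic_mono {P : Type*} [Fintype P] [DecidableEq P]
    (u : (P → Fin 2) → P → Fin 2 → unitInterval)
    (hVIC : ∀ (S₁ S₂ : P → Fin 2) (p : P),
      (∀ q, q ≠ p → S₁ q = S₂ q) → S₁ p = 0 → S₂ p = 1 →
      ∀ q : P, u S₂ q 0 ≤ u S₁ q 0 ∧ u S₁ q 1 ≤ u S₂ q 1) :
    ∀ (n : ℕ) (S₁ S₂ : P → Fin 2),
      (univ.filter (fun q => S₁ q ≠ S₂ q)).card = n →
      (∀ q, S₁ q = 1 → S₂ q = 1) →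
      ∀ q : P, u S₂ q 0 ≤ u S₁ q 0 ∧ u S₁ q 1 ≤ u S₂ q 1 := by
  intro n
  induction n with
  | zero =>
    intro S₁ S₂ hcard _ q
    have : S₁ = S₂ := by
      funext x
      by_contra hx
      have : x ∈ univ.filter (fun q => S₁ q ≠ S₂ q) := by simp [hx]
      simp [Finset.card_eq_zero.mp hcard] at this
    simp [this]
  | succ n ih =>
    intro S₁ S₂ hcard hle q
    have hne : (univ.filter (fun q => S₁ q ≠ S₂ q)).Nonempty := by
      rw [← Finset.card_pos, hcard]; omega
    obtain ⟨p, hp⟩ := hne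
    have hpd : S₁ p ≠ S₂ p := by simpa using hp
    have h1 : S₁ p = 0 := by
      have : S₁ p = 0 ∨ S₁ p = 1 := by omega
      rcases this with h | h
      · exact h
      · exact absurd (h.trans (hle p h).symm) hpd
    have h2 : S₂ p = 1 := by
      have : S₂ p = 0 ∨ S₂ p = 1 := by omega
      rcases this with h | h
      · exact absurd (h1.trans h.symm) hpd
      · exact h
    set S' := Function.update S₁ p 1 with hS'
    have hA := hVIC S₁ S' p (fun q hq => (Function.update_of_ne hq _ _).symm) h1
      (Function.update_self _ _ _)
    have hle' : ∀ q, S' q = 1 → S₂ q = 1 := by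
      intro q hq
      by_cases hqp : q = p
      · exact hqp ▸ h2
      · exact hle q (by rwa [hS', Function.update_of_ne hqp] at hq)
    have hset : univ.filter (fun q => S' q ≠ S₂ q)
        = (univ.filter (fun q => S₁ q ≠ S₂ q)).erase p := by
      ext x
      by_cases hxp : x = p
      · subst hxp
        simp [hS', Function.update_self, h2]
      · simp [hS', Function.update_of_ne hxp, hxp]
    have hcard' : (univ.filter (fun q => S' q ≠ S₂ q)).card = n := by
      rw [hset, Finset.card_erase_of_mem hp, hcard]
      omega
    have hB := ih S' S₂ hcard' hle' q
    exact ⟨hB.1.trans (hA q).1, (hA q).2.trans hB.2⟩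

/-- Simultaneous best-response from the all-`0` ("all action 1") state in the
VIC monotone two-action game never overshoots: once a player has switched to
action `1` ("action 2") at some stage, she continues to weakly prefer it at
all later stages of the best-response sequence. -/
theorem stmt_15 (P : Type*) [Fintype P] [DecidableEq P]
    (u : (P → Fin 2) → P → Fin 2 → unitInterval)
    (hVIC : ∀ (S₁ S₂ : P → Fin 2) (p : P),
      (∀ q, q ≠ p → S₁ q = S₂ q) → S₁ p = 0 → S₂ p = 1 →
      ∀ q : P, u S₂ q 0 ≤ u S₁ q 0 ∧ u S₁ q 1 ≤ u S₂ q 1)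
    (seq : ℕ → (P → Fin 2))
    (hseq0 : seq 0 = fun _ => 0)
    (hseqS : ∀ (k : ℕ) (p : P),
      seq (k + 1) p = if seq k p = 1 ∨ u (seq k) p 1 > u (seq k) p 0 then 1 else 0) :
    ∀ (k k' : ℕ), k ≤ k' → ∀ p : P, seq k p = 1 →
      u (seq k') p 0 ≤ u (seq k') p 1 := by
  have mono1 : ∀ k p, seq k p = 1 → seq (k + 1) p = 1 := by
    intro k p h
    rw [hseqS]; exact if_pos (Or.inl h)
  have mono : ∀ j k, j ≤ k → ∀ p, seq j p = 1 → seq k p = 1 := by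
    intro j k hjk
    induction k, hjk using Nat.le_induction with
    | base => intro p h; exact h
    | succ m hm ih => intro p h; exact mono1 m p (ih p h)
  have first : ∀ k p, seq k p = 1 → ∃ j, j < k ∧ u (seq j) p 0 < u (seq j) p 1 := by
    intro k
    induction k with
    | zero => intro p h; rw [hseq0] at h; simp at h
    | succ m ih =>
      intro p h
      have h01 : seq m p = 0 ∨ seq m p = 1 := by omega
      rcases h01 with h0 | h1
      · rw [hseqS] at h
        by_cases hc : seq m p = 1 ∨ u (seq m) p 1 > u (seq m) p 0
        · rcases hc with hc | hc
          · rw [h0] at hc; exact absurd hc (by decide)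
          · exact ⟨m, Nat.lt_succ_self m, hc⟩
        · rw [if_neg hc] at h; exact absurd h (by decide)
      · obtain ⟨j, hj, hu⟩ := ih p h1
        exact ⟨j, hj.trans (Nat.lt_succ_self m), hu⟩
  intro k k' hkk' p hk
  obtain ⟨j, hjk, hu⟩ := first k p hk
  have hjk' : j ≤ k' := by omega
  have hpt : ∀ q, seq j q = 1 → seq k' q = 1 := fun q => mono j k' hjk' q
  have hm := vic_mono u hVIC _ (seq j) (seq k') rfl hpt p
  exact le_trans hm.1 (le_trans hu.le hm.2)
end
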